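/- Let Δ be a simplicial forest with n vertices and more than one facet, and suppose β_{i,n}(Δ) ≠ 0 for some i. Then for every facet G of Δ, the induced subcollection Δ_[G] has a complement Δ_[u] in Δ satisfying β_{i−1,|u|}(Δ_[u]) ≠ 0. -/

import Mathlib

namespace FacetPaper

variable (k : Type*) [Field k]
variable {V : Type*} [DecidableEq V] [LinearOrder V]

/-- The vertex set of a simplicial complex given by its (finite) set of facets. -/
def vertexSet (Δ : Finset (Finset V)) : Finset V := Δ.sup id

/-- The induced subcollection `Δ_[u]`: the complex whose facets are the facets
of `Δ` contained in `u`. -/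
def induced (Δ : Finset (Finset V)) (u : Finset V) : Finset (Finset V) :=
  Δ.filter (fun F => F ⊆ u)

/-- `F` is a leaf of the complex with facet set `Δ`. -/
def IsLeaf (Δ : Finset (Finset V)) (F : Finset V) : Prop :=
  F ∈ Δ ∧ (Δ = {F} ∨ ∃ G ∈ Δ, G ≠ F ∧ ∀ H ∈ Δ, H ≠ F → F ∩ H ⊆ G)

/-- A simplicial forest: every nonempty subcollection has a leaf. -/
def IsForest (Δ : Finset (Finset V)) : Prop :=
  ∀ Γ ⊆ Δ, Γ.Nonempty → ∃ F, IsLeaf Γ F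

/-- The facet `F` has a free vertex: a vertex of `F` lying in no other facet. -/
def HasFreeVertex (Δ : Finset (Finset V)) (F : Finset V) : Prop :=
  ∃ x ∈ F, ∀ G ∈ Δ, x ∈ G → G = F

/-- Minimal elements, under inclusion, of a finite family of finite sets. -/
def minimals (S : Finset (Finset V)) : Finset (Finset V) :=
  S.filter (fun A => ∀ B ∈ S, B ⊆ A → B = A)

/-- The localization (restriction) `Δ_W`: minimal elements of the nonempty
intersections of facets with `W`. -/
def localization (Δ : Finset (Finset V)) (W : Finset V) : Finset (Finset V) :=
  minimals ((Δ.image (fun F => F ∩ W)).filter (fun A => A.Nonempty))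

/-- `Γ = (Δ ∖ ⟨F⟩)_{F̄}`: the minimal elements under inclusion of
`{G ∖ F : G a facet of Δ, G ≠ F}`. -/
def gammaOf (Δ : Finset (Finset V)) (F : Finset V) : Finset (Finset V) :=
  minimals ((Δ.erase F).image (fun G => G \ F))

/-- `Δ_[u]` and `Δ_[v]` are complements in `Δ`: `u`, `v` are proper subsets of the
vertex set, `u ∪ v = V(Δ)`, and `Δ_[u]`, `Δ_[v]` have no facet in common. -/
def Complements (Δ : Finset (Finset V)) (u v : Finset V) : Prop :=
  u ⊂ vertexSet Δ ∧ v ⊂ vertexSet Δ ∧ u ∪ v = vertexSet Δ ∧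
    ∀ F ∈ Δ, ¬ (F ∈ induced Δ u ∧ F ∈ induced Δ v)

/-! ### Graded Betti numbers via the Taylor complex

For a square-free monomial ideal `I` with facet complex `Δ` (facets = supports of
the minimal monomial generators), the Taylor complex is a graded free resolution of
`S/I`, so `Tor_i^S(S/I,k)` is the `i`-th homology of the Taylor complex tensored
with `k`.  The resulting complex of `k`-vector spaces has basis the subsets `σ` of
the set of generators, a basis element `σ` sitting in homological degree `|σ|` and
multidegree `lcm σ` (= the union of the supports), with differential
`∂σ = Σ_{F ∈ σ, lcm(σ∖F) = lcm σ} ± (σ ∖ F)`.  The multigraded Betti number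
`β_{i,u}(S/I) = dim_k Tor_i(S/I,k)_u` is the dimension of the homology of the
multidegree-`u` strand in homological degree `i`. -/

/-- The sign `(-1)^{position of F in σ}` (using the colexicographic order). -/
noncomputable def taylorSign (σ : Finset (Finset V)) (F : Finset V) : k :=
  (-1 : k) ^ (σ.filter (fun G => toColex G < toColex F)).card

/-- The Taylor differential (tensored with `k`) on a basis element. -/
noncomputable def taylorD (σ : Finset (Finset V)) : Finset (Finset V) →₀ k :=
  ∑ F ∈ σ, if (σ.erase F).sup id = σ.sup id then
    taylorSign k σ F • Finsupp.single (σ.erase F) (1 : k) else 0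

/-- The Taylor differential as a linear map. -/
noncomputable def taylorDiff : (Finset (Finset V) →₀ k) →ₗ[k] (Finset (Finset V) →₀ k) :=
  Finsupp.lsum k (fun σ => LinearMap.toSpanSingleton k _ (taylorD k σ))

/-- The strand of the Taylor complex (tensored with `k`) of the complex `Δ` in
homological degree `i` and multidegree `u`. -/
noncomputable def strand (Δ : Finset (Finset V)) (i : ℕ) (u : Finset V) :
    Submodule k (Finset (Finset V) →₀ k) :=
  Submodule.span k
    {x | ∃ σ : Finset (Finset V), σ ⊆ Δ ∧ σ.card = i ∧ σ.sup id = u ∧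
      x = Finsupp.single σ (1 : k)}

/-- Cycles of the multidegree-`u` strand in homological degree `i`. -/
noncomputable def taylorCycles (Δ : Finset (Finset V)) (i : ℕ) (u : Finset V) :
    Submodule k (Finset (Finset V) →₀ k) :=
  LinearMap.ker (taylorDiff k) ⊓ strand k Δ i u

/-- Boundaries of the multidegree-`u` strand in homological degree `i`. -/
noncomputable def taylorBoundaries (Δ : Finset (Finset V)) (i : ℕ) (u : Finset V) :
    Submodule k (Finset (Finset V) →₀ k) :=
  Submodule.map (taylorDiff k) (strand k Δ (i + 1) u)

/-- The multigraded Betti number `β_{i,u}(Δ) = dim_k Tor_i^S(S/F(Δ), k)_u`,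
computed as the homology (dimension of cycles minus dimension of boundaries; all
these spaces are finite dimensional and the boundaries lie inside the cycles) of
the multidegree-`u` strand of the Taylor complex tensored with `k`. -/
noncomputable def multigradedBetti (Δ : Finset (Finset V)) (i : ℕ) (u : Finset V) : ℕ :=
  Module.finrank k ↥(taylorCycles k Δ i u) -
    Module.finrank k ↥(taylorBoundaries k Δ i u ⊓ taylorCycles k Δ i u)

/-- The graded Betti number `β_{i,j}(Δ) = dim_k Tor_i^S(S/F(Δ), k)_j`, the sum of
the multigraded Betti numbers over the square-free multidegrees of degree `j`
supported on the vertices of `Δ`. -/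
noncomputable def gradedBetti (Δ : Finset (Finset V)) (i j : ℕ) : ℕ :=
  ∑ u ∈ (vertexSet Δ).powersetCard j, multigradedBetti k Δ i u

/-- `t_c(I)`:  the largest internal degree `j` with `β_{c,j} ≠ 0`. -/
noncomputable def tdeg (Δ : Finset (Finset V)) (c : ℕ) : ℕ :=
  sSup {j | gradedBetti k Δ c j ≠ 0}

/-- The projective dimension of `S/F(Δ)`: the largest homological degree with a
nonvanishing Betti number. -/
noncomputable def projDim (Δ : Finset (Finset V)) : ℕ :=
  sSup {c | ∃ j, gradedBetti k Δ c j ≠ 0}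

/-- Membership in the lcm lattice `LCM(I)`: `m_u` is an lcm of a set of generators. -/
def MemLcmLattice (Δ : Finset (Finset V)) (u : Finset V) : Prop :=
  ∃ A ⊆ Δ, u = A.sup id

/-- `m_u` and `m_v` are complements in the lcm lattice: their lcm is `1̂` (the lcm of
all the generators) and their gcd `m_{u ∩ v}` is not in the ideal (no generator
divides it). -/
def LcmComplements (Δ : Finset (Finset V)) (u v : Finset V) : Prop :=
  u ∪ v = vertexSet Δ ∧ ¬ ∃ F ∈ Δ, F ⊆ u ∩ v

/-!
Fix a facet `G ⊆ W` and look at the multidegree-`W` strand of the Taylor complex. Adjoining `G`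
(`insertFacet`) is a contracting homotopy on chains avoiding `G`, up to terms in which removing a
facet lowers the multidegree. Subtracting from a cycle the boundary of `insertFacet G` applied to
its `G`-free part leaves a cycle all of whose terms `σ` contain `G`, and for such a cycle the
residual multidegree `(σ.erase G).sup id` is some `u ⊂ W` with `G ∪ u = W`. The part of largest
residual multidegree `u`, with `G` removed, is a cycle of the strand `u` one degree lower; if
`β_{m,u} = 0` it bounds, and adjoining `G` to a preimage trades that part for terms of smaller
residual multidegree. Descending through the residual multidegrees shows that `β_{m+1,W} ≠ 0`
forces `β_{m,u} ≠ 0` for some `u ⊂ W` with `G ∪ u = W`. For `W = V(Δ)` the antichain condition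
makes `Δ_[u]` a complement of `Δ_[G]`, and `β_{m,u}(Δ) = β_{m,|u|}(Δ_[u])` since the strand `u`
only involves facets inside `u`.
-/

open Finsupp

section

variable {k} {α : Type*} [DecidableEq α]

local notation "𝒞" => Finset (Finset V) →₀ k

theorem map_mem_of_mem_supported {ι M : Type*} [AddCommGroup M] [Module k M] {s : Set ι}
    {p : Submodule k M} (Φ : (ι →₀ k) →ₗ[k] M) (h : ∀ a ∈ s, Φ (single a 1) ∈ p) {x : ι →₀ k}
    (hx : x ∈ supported k k s) : Φ x ∈ p := by
  rw [supported_eq_span_single] at hx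
  refine (Submodule.span_le (p := p.comap Φ)).2 ?_ hx
  rintro _ ⟨a, ha, rfl⟩
  exact h a ha

theorem filter_mem_supported {ι : Type*} {s : Set ι} {p : ι → Prop} [DecidablePred p]
    {x : ι →₀ k} (hx : x ∈ supported k k s) : x.filter p ∈ supported k k (s ∩ {a | p a}) :=
  fun a ha => by
    rw [Finset.mem_coe, support_filter, Finset.mem_filter] at ha
    exact ⟨hx ha.1, ha.2⟩

theorem sup_erase_erase_eq_iff (σ : Finset (Finset α)) (F F' : Finset α) :
    ((σ.erase F).erase F').sup id = σ.sup id ↔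
      (σ.erase F).sup id = σ.sup id ∧ ((σ.erase F).erase F').sup id = (σ.erase F).sup id := by
  have h₁ : ((σ.erase F).erase F').sup id ≤ (σ.erase F).sup id :=
    Finset.sup_mono (Finset.erase_subset _ _)
  have h₂ : (σ.erase F).sup id ≤ σ.sup id := Finset.sup_mono (Finset.erase_subset _ _)
  refine ⟨fun h => ?_, fun h => h.2.trans h.1⟩
  have h₃ : (σ.erase F).sup id = σ.sup id := le_antisymm h₂ (h ▸ h₁)
  exact ⟨h₃, h.trans h₃.symm⟩

theorem sup_eq_union_sup_erase {σ : Finset (Finset α)} {G : Finset α} (hG : G ∈ σ) :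
    σ.sup id = G ∪ (σ.erase G).sup id := by
  conv_lhs => rw [← Finset.insert_erase hG]
  rw [Finset.sup_insert]
  rfl

def strandBasis (Δ : Finset (Finset α)) (j : ℕ) (u : Finset α) : Set (Finset (Finset α)) :=
  {σ | σ ⊆ Δ ∧ σ.card = j ∧ σ.sup id = u}

theorem strand_eq_supported (Δ : Finset (Finset α)) (j : ℕ) (u : Finset α) :
    strand k Δ j u = supported k k (strandBasis Δ j u) := by
  rw [supported_eq_span_single, strand]
  congr 1
  ext x
  simp [strandBasis, eq_comm, and_assoc]

theorem insert_mem_strandBasis {Δ τ : Finset (Finset α)} {G u : Finset α} {j : ℕ} (hG : G ∈ Δ)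
    (hGτ : G ∉ τ) (hτ : τ ∈ strandBasis Δ j u) : insert G τ ∈ strandBasis Δ (j + 1) (G ∪ u) := by
  obtain ⟨hτΔ, hcard, hsup⟩ := hτ
  refine ⟨Finset.insert_subset hG hτΔ, by rw [Finset.card_insert_of_notMem hGτ, hcard], ?_⟩
  rw [Finset.sup_insert, hsup]
  rfl

theorem erase_mem_strandBasis {Δ τ : Finset (Finset α)} {F u : Finset α} {j : ℕ}
    (hτ : τ ∈ strandBasis Δ (j + 1) u) (hF : F ∈ τ) :
    τ.erase F ∈ strandBasis Δ j ((τ.erase F).sup id) :=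
  ⟨(Finset.erase_subset F τ).trans hτ.1, by rw [Finset.card_erase_of_mem hF, hτ.2.1]; rfl, rfl⟩

variable (k) in
noncomputable def taylorCoeff (σ : Finset (Finset V)) (F : Finset V) : k :=
  if (σ.erase F).sup id = σ.sup id then taylorSign k σ F else 0

theorem taylorSign_mul_self (σ : Finset (Finset V)) (F : Finset V) :
    taylorSign k σ F * taylorSign k σ F = 1 := by
  rw [taylorSign, ← pow_add]
  exact Even.neg_one_pow ⟨_, rfl⟩

theorem taylorSign_ne_zero (σ : Finset (Finset V)) (F : Finset V) : taylorSign k σ F ≠ 0 :=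
  pow_ne_zero _ (neg_ne_zero.2 one_ne_zero)

theorem taylorSign_erase {σ : Finset (Finset V)} {F F' : Finset V} (hF : F ∈ σ) :
    taylorSign k (σ.erase F) F' =
      (if toColex F < toColex F' then -1 else 1) * taylorSign k σ F' := by
  unfold taylorSign
  rw [Finset.filter_erase]
  split_ifs with h
  · have hmem : F ∈ σ.filter (fun G => toColex G < toColex F') := Finset.mem_filter.2 ⟨hF, h⟩
    rw [← Finset.card_erase_add_one hmem, pow_succ]
    ring
  · have hmem : F ∉ σ.filter (fun G => toColex G < toColex F') :=
      fun hmem => h (Finset.mem_filter.1 hmem).2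
    rw [Finset.erase_eq_of_notMem hmem, one_mul]

theorem taylorSign_mul_taylorSign_erase {σ : Finset (Finset V)} {F F' : Finset V} (hF : F ∈ σ)
    (hF' : F' ∈ σ) (hne : F ≠ F') :
    taylorSign k σ F * taylorSign k (σ.erase F) F' =
      -(taylorSign k σ F' * taylorSign k (σ.erase F') F) := by
  rw [taylorSign_erase hF, taylorSign_erase hF']
  rcases lt_or_gt_of_ne (toColex_inj.not.2 hne) with h | h
  · rw [if_pos h, if_neg (asymm h)]; ring
  · rw [if_neg (asymm h), if_pos h]; ring

theorem taylorD_eq_sum (σ : Finset (Finset V)) :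
    taylorD k σ = ∑ F ∈ σ, taylorCoeff k σ F • single (σ.erase F) 1 := by
  simp only [taylorD, taylorCoeff, ite_smul, zero_smul]

theorem taylorCoeff_mul_taylorCoeff_erase {σ : Finset (Finset V)} {F F' : Finset V} (hF : F ∈ σ)
    (hF' : F' ∈ σ) (hne : F ≠ F') :
    taylorCoeff k σ F * taylorCoeff k (σ.erase F) F' =
      -(taylorCoeff k σ F' * taylorCoeff k (σ.erase F') F) := by
  have hcond : ((σ.erase F).sup id = σ.sup id ∧
        ((σ.erase F).erase F').sup id = (σ.erase F).sup id) ↔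
      ((σ.erase F').sup id = σ.sup id ∧
        ((σ.erase F').erase F).sup id = (σ.erase F').sup id) := by
    rw [← sup_erase_erase_eq_iff, ← sup_erase_erase_eq_iff, Finset.erase_right_comm]
  unfold taylorCoeff
  rw [ite_zero_mul_ite_zero, ite_zero_mul_ite_zero]
  by_cases h : (σ.erase F).sup id = σ.sup id ∧
      ((σ.erase F).erase F').sup id = (σ.erase F).sup id
  · rw [if_pos h, if_pos (hcond.1 h)]
    exact taylorSign_mul_taylorSign_erase hF hF' hne
  · rw [if_neg h, if_neg (mt hcond.2 h), neg_zero]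

theorem taylorDiff_single (σ : Finset (Finset V)) (c : k) :
    taylorDiff k (single σ c) = c • taylorD k σ := by
  rw [taylorDiff, lsum_single, LinearMap.toSpanSingleton_apply]

theorem taylorDiff_eq_sum (x : 𝒞) : taylorDiff k x = ∑ σ ∈ x.support, x σ • taylorD k σ := rfl

theorem taylorDiff_apply (x : 𝒞) (τ : Finset (Finset V)) :
    taylorDiff k x τ = ∑ σ ∈ x.support, x σ * taylorD k σ τ := by
  rw [taylorDiff_eq_sum, Finset.sum_apply']
  rfl

theorem taylorD_apply_erase {σ : Finset (Finset V)} {F : Finset V} (hF : F ∈ σ) :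
    taylorD k σ (σ.erase F) = taylorCoeff k σ F := by
  rw [taylorD_eq_sum, Finset.sum_apply', Finset.sum_eq_single_of_mem F hF]
  · simp
  · intro F' hF' hne
    simp [Finset.erase_inj σ hF', hne]

theorem taylorD_apply_eq_zero {σ τ : Finset (Finset V)} (h : ∀ F ∈ σ, σ.erase F ≠ τ) :
    taylorD k σ τ = 0 := by
  rw [taylorD_eq_sum, Finset.sum_apply']
  exact Finset.sum_eq_zero fun F hF => by simp [h F hF]

theorem taylorDiff_mem_supported {s t : Set (Finset (Finset V))} {x : 𝒞}
    (hx : x ∈ supported k k s)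
    (h : ∀ σ ∈ s, ∀ F ∈ σ, (σ.erase F).sup id = σ.sup id → σ.erase F ∈ t) :
    taylorDiff k x ∈ supported k k t := by
  refine map_mem_of_mem_supported _ (fun σ hσ => ?_) hx
  rw [taylorDiff_single, one_smul, taylorD_eq_sum]
  refine Submodule.sum_mem _ fun F hF => ?_
  unfold taylorCoeff
  split_ifs with hsup
  · exact Submodule.smul_mem _ _ (single_mem_supported k 1 (h σ hσ F hF hsup))
  · rw [zero_smul]; exact Submodule.zero_mem _

theorem taylorDiff_taylorD (σ : Finset (Finset V)) : taylorDiff k (taylorD k σ) = 0 := by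
  let f : Finset V × Finset V → 𝒞 := fun p =>
    (taylorCoeff k σ p.1 * taylorCoeff k (σ.erase p.1) p.2) • single ((σ.erase p.1).erase p.2) 1
  have hsum : taylorDiff k (taylorD k σ) = ∑ p ∈ σ.offDiag, f p := by
    rw [Finset.sum_finset_product σ.offDiag σ (fun F => σ.erase F)
      (fun p => by simp only [Finset.mem_offDiag, Finset.mem_erase]; tauto)]
    rw [taylorD_eq_sum, map_sum]
    refine Finset.sum_congr rfl fun F _ => ?_
    rw [map_smul, taylorDiff_single, one_smul, taylorD_eq_sum, Finset.smul_sum]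
    simp only [f, smul_smul]
  rw [hsum]
  refine Finset.sum_involution (fun p _ => p.swap) ?_ ?_ ?_ (fun p _ => p.swap_swap)
  · rintro ⟨F, F'⟩ hp
    obtain ⟨hF, hF', hne⟩ : F ∈ σ ∧ F' ∈ σ ∧ F ≠ F' := Finset.mem_offDiag.1 hp
    simp only [f, Prod.swap_prod_mk]
    rw [Finset.erase_right_comm (a := F'), taylorCoeff_mul_taylorCoeff_erase hF hF' hne,
      neg_smul, neg_add_cancel]
  · rintro ⟨F, F'⟩ hp - h
    exact (Finset.mem_offDiag.1 hp).2.2 (Prod.ext_iff.1 h).2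
  · rintro ⟨F, F'⟩ hp
    obtain ⟨hF, hF', hne⟩ : F ∈ σ ∧ F' ∈ σ ∧ F ≠ F' := Finset.mem_offDiag.1 hp
    exact Finset.mem_offDiag.2 ⟨hF', hF, hne.symm⟩

theorem taylorDiff_taylorDiff (x : 𝒞) : taylorDiff k (taylorDiff k x) = 0 := by
  rw [taylorDiff_eq_sum x, map_sum]
  exact Finset.sum_eq_zero fun σ _ => by rw [map_smul, taylorDiff_taylorD, smul_zero]

theorem multigradedBetti_eq_zero_iff_le (Δ : Finset (Finset V)) (i : ℕ) (u : Finset V) :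
    multigradedBetti k Δ i u = 0 ↔ taylorCycles k Δ i u ≤ taylorBoundaries k Δ i u := by
  have : FiniteDimensional k (strand k Δ i u) := by
    rw [strand]
    refine FiniteDimensional.span_of_finite k ((Δ.powerset.finite_toSet.image
      fun σ => single σ (1 : k)).subset ?_)
    rintro _ ⟨σ, hσ, -, -, rfl⟩
    exact ⟨σ, Finset.mem_powerset.2 hσ, rfl⟩
  have : FiniteDimensional k (taylorCycles k Δ i u) :=
    Submodule.finiteDimensional_of_le inf_le_right
  rw [multigradedBetti, Nat.sub_eq_zero_iff_le]
  constructor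
  · intro h
    rw [← Submodule.eq_of_le_of_finrank_le inf_le_right h]
    exact inf_le_left
  · intro h
    rw [inf_eq_right.2 h]

theorem multigradedBetti_eq_zero_iff (Δ : Finset (Finset V)) (i : ℕ) (u : Finset V) :
    multigradedBetti k Δ i u = 0 ↔ ∀ x ∈ strand k Δ i u, taylorDiff k x = 0 →
      ∃ y ∈ strand k Δ (i + 1) u, taylorDiff k y = x := by
  rw [multigradedBetti_eq_zero_iff_le]
  exact ⟨fun h x hx hcyc => Submodule.mem_map.1 (h ⟨hcyc, hx⟩),
    fun h x hx => Submodule.mem_map.2 (h x hx.2 hx.1)⟩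

theorem multigradedBetti_eq_zero_of_strandBasis_eq_empty {Δ : Finset (Finset V)} {i : ℕ}
    {u : Finset V} (h : strandBasis Δ i u = ∅) : multigradedBetti k Δ i u = 0 := by
  rw [multigradedBetti, taylorCycles, strand_eq_supported, h, supported_empty, inf_bot_eq,
    finrank_bot, Nat.zero_sub]

variable (k) in
noncomputable def insertFacet (G : Finset V) : 𝒞 →ₗ[k] 𝒞 :=
  linearCombination k fun τ => taylorSign k (insert G τ) G • single (insert G τ) 1

variable (k) in
noncomputable def eraseFacet (G : Finset V) : 𝒞 →ₗ[k] 𝒞 :=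
  linearCombination k fun σ => taylorSign k σ G • single (σ.erase G) 1

variable {G : Finset V}

theorem insertFacet_single (τ : Finset (Finset V)) :
    insertFacet k G (single τ 1) = taylorSign k (insert G τ) G • single (insert G τ) 1 := by
  rw [insertFacet, linearCombination_single, one_smul]

theorem eraseFacet_single (σ : Finset (Finset V)) :
    eraseFacet k G (single σ 1) = taylorSign k σ G • single (σ.erase G) 1 := by
  rw [eraseFacet, linearCombination_single, one_smul]

theorem insertFacet_mem_supported {s t : Set (Finset (Finset V))} {x : 𝒞}
    (hx : x ∈ supported k k s) (h : ∀ τ ∈ s, insert G τ ∈ t) :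
    insertFacet k G x ∈ supported k k t :=
  map_mem_of_mem_supported _ (fun τ hτ => by
    rw [insertFacet_single]
    exact Submodule.smul_mem _ _ (single_mem_supported k 1 (h τ hτ))) hx

theorem eraseFacet_mem_supported {s t : Set (Finset (Finset V))} {x : 𝒞}
    (hx : x ∈ supported k k s) (h : ∀ σ ∈ s, σ.erase G ∈ t) :
    eraseFacet k G x ∈ supported k k t :=
  map_mem_of_mem_supported _ (fun σ hσ => by
    rw [eraseFacet_single]
    exact Submodule.smul_mem _ _ (single_mem_supported k 1 (h σ hσ))) hx

theorem insertFacet_eraseFacet {x : 𝒞} (hx : x ∈ supported k k {σ | G ∈ σ}) :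
    insertFacet k G (eraseFacet k G x) = x := by
  have h := map_mem_of_mem_supported (p := ⊥)
    (insertFacet k G ∘ₗ eraseFacet k G - LinearMap.id) (fun σ (hσ : G ∈ σ) => by
      rw [Submodule.mem_bot, LinearMap.sub_apply, LinearMap.comp_apply, eraseFacet_single,
        map_smul, insertFacet_single, Finset.insert_erase hσ, smul_smul, taylorSign_mul_self,
        one_smul, LinearMap.id_apply, sub_self]) hx
  rwa [Submodule.mem_bot, LinearMap.sub_apply, sub_eq_zero] at h

theorem taylorSign_mul_taylorCoeff_insert_add_eq_zero {τ : Finset (Finset V)} {F : Finset V}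
    (hGτ : G ∉ τ) (hF : F ∈ τ) (hsup : (τ.erase F).sup id = τ.sup id) :
    taylorSign k (insert G τ) G * taylorCoeff k (insert G τ) F +
      taylorCoeff k τ F * taylorSign k (insert G (τ.erase F)) G = 0 := by
  have hFG : F ≠ G := fun h => hGτ (h ▸ hF)
  have herase : (insert G τ).erase F = insert G (τ.erase F) := Finset.erase_insert_of_ne hFG.symm
  have hsup' : ((insert G τ).erase F).sup id = (insert G τ).sup id := by
    rw [herase, Finset.sup_insert, Finset.sup_insert, hsup]
  have hsigns := taylorSign_mul_taylorSign_erase (k := k) (Finset.mem_insert_self G τ)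
    (Finset.mem_insert_of_mem hF) hFG.symm
  rw [Finset.erase_insert hGτ, herase] at hsigns
  rw [taylorCoeff, taylorCoeff, if_pos hsup', if_pos hsup]
  linear_combination (taylorSign k (insert G τ) G * taylorSign k (insert G (τ.erase F)) G) *
      hsigns - (taylorSign k τ F * taylorSign k (insert G (τ.erase F)) G) *
      taylorSign_mul_self (k := k) (insert G τ) G -
    (taylorSign k (insert G τ) G * taylorSign k (insert G τ) F) *
      taylorSign_mul_self (k := k) (insert G (τ.erase F)) G

theorem taylorDiff_insertFacet_single {τ : Finset (Finset V)} (hGτ : G ∉ τ) :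
    taylorDiff k (insertFacet k G (single τ 1)) =
      (if G ⊆ τ.sup id then single τ 1 else 0) +
        ∑ F ∈ τ, (taylorSign k (insert G τ) G * taylorCoeff k (insert G τ) F) •
          single (insert G (τ.erase F)) 1 := by
  have hcond : τ.sup id = (insert G τ).sup id ↔ G ⊆ τ.sup id := by
    rw [Finset.sup_insert, eq_comm]
    exact sup_eq_right
  rw [insertFacet_single, map_smul, taylorDiff_single, one_smul, taylorD_eq_sum,
    Finset.sum_insert hGτ, smul_add, Finset.smul_sum]
  congr 1
  · rw [smul_smul, taylorCoeff, Finset.erase_insert hGτ]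
    simp only [hcond]
    split_ifs
    · rw [taylorSign_mul_self, one_smul]
    · rw [mul_zero, zero_smul]
  · refine Finset.sum_congr rfl fun F hF => ?_
    rw [smul_smul, Finset.erase_insert_of_ne (ne_of_mem_of_not_mem hF hGτ).symm]

theorem insertFacet_taylorD (τ : Finset (Finset V)) :
    insertFacet k G (taylorD k τ) =
      ∑ F ∈ τ, (taylorCoeff k τ F * taylorSign k (insert G (τ.erase F)) G) •
        single (insert G (τ.erase F)) 1 := by
  rw [taylorD_eq_sum, map_sum]
  exact Finset.sum_congr rfl fun F _ => by rw [map_smul, insertFacet_single, smul_smul]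

/-- `insertFacet G` is a contracting homotopy, up to the terms in which removing a facet of `τ`
lowers its multidegree. -/
theorem insertFacet_homotopy_single {τ : Finset (Finset V)} (hGτ : G ∉ τ) :
    taylorDiff k (insertFacet k G (single τ 1)) + insertFacet k G (taylorD k τ) -
        (if G ⊆ τ.sup id then single τ 1 else 0) ∈
      supported k k {σ | ∃ F ∈ τ, σ = insert G (τ.erase F) ∧ (τ.erase F).sup id ≠ τ.sup id ∧
        σ.sup id = G ∪ τ.sup id} := by
  rw [taylorDiff_insertFacet_single hGτ, insertFacet_taylorD, add_sub_right_comm,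
    add_sub_cancel_left, ← Finset.sum_add_distrib]
  refine Submodule.sum_mem _ fun F hF => ?_
  rw [← add_smul]
  by_cases hsup : (τ.erase F).sup id = τ.sup id
  · rw [taylorSign_mul_taylorCoeff_insert_add_eq_zero hGτ hF hsup, zero_smul]
    exact Submodule.zero_mem _
  rw [show taylorCoeff k τ F = 0 from if_neg hsup, zero_mul, add_zero, taylorCoeff,
    Finset.erase_insert_of_ne (ne_of_mem_of_not_mem hF hGτ).symm]
  split_ifs with hsup'
  · refine Submodule.smul_mem _ _ (single_mem_supported k 1 ⟨F, hF, rfl, hsup, ?_⟩)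
    rw [hsup', Finset.sup_insert]
    rfl
  · rw [mul_zero, zero_smul]
    exact Submodule.zero_mem _

theorem insertFacet_homotopy {s t : Set (Finset (Finset V))} {u : Finset V} {y : 𝒞}
    (hy : y ∈ supported k k s) (hs : ∀ τ ∈ s, G ∉ τ ∧ τ.sup id = u)
    (ht : ∀ τ ∈ s, ∀ F ∈ τ, (τ.erase F).sup id ≠ u → (insert G (τ.erase F)).sup id = G ∪ u →
      insert G (τ.erase F) ∈ t) :
    taylorDiff k (insertFacet k G y) + insertFacet k G (taylorDiff k y) -
      (if G ⊆ u then y else 0) ∈ supported k k t := by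
  let Φ : 𝒞 →ₗ[k] 𝒞 := taylorDiff k ∘ₗ insertFacet k G + insertFacet k G ∘ₗ taylorDiff k -
    if G ⊆ u then LinearMap.id else 0
  have hΦ : ∀ x, Φ x = taylorDiff k (insertFacet k G x) + insertFacet k G (taylorDiff k x) -
      (if G ⊆ u then x else 0) := fun x => by
    split_ifs <;> simp [Φ, *]
  rw [← hΦ]
  refine map_mem_of_mem_supported Φ (fun τ hτ => ?_) hy
  obtain ⟨hGτ, rfl⟩ := hs τ hτ
  rw [hΦ, taylorDiff_single, one_smul]
  refine supported_mono ?_ (insertFacet_homotopy_single hGτ)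
  rintro _ ⟨F, hF, rfl, hsup, hsup'⟩
  exact ht τ hτ F hF hsup hsup'

theorem sup_erase_ne_of_taylorDiff_eq_zero {x : 𝒞} {W : Finset V}
    (hx : ∀ σ ∈ x.support, G ∈ σ ∧ σ.sup id = W) (hcyc : taylorDiff k x = 0)
    {σ : Finset (Finset V)} (hσ : σ ∈ x.support) : (σ.erase G).sup id ≠ W := by
  intro hW
  obtain ⟨hGσ, hσW⟩ := hx σ hσ
  have hcoeff : taylorDiff k x (σ.erase G) = x σ * taylorCoeff k σ G := by
    rw [taylorDiff_apply, Finset.sum_eq_single_of_mem σ hσ, taylorD_apply_erase hGσ]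
    intro σ' hσ' hne
    rw [taylorD_apply_eq_zero, mul_zero]
    intro F hF hFeq
    have hFG : F = G := by
      by_contra hFG
      exact Finset.notMem_erase G σ (hFeq ▸ Finset.mem_erase.2 ⟨Ne.symm hFG, (hx σ' hσ').1⟩)
    subst hFG
    exact hne (Finset.erase_injOn' F (hx σ' hσ').1 hGσ hFeq)
  rw [hcyc, taylorCoeff, if_pos (hW.trans hσW.symm)] at hcoeff
  exact mul_ne_zero (mem_support_iff.1 hσ) (taylorSign_ne_zero σ G) hcoeff.symm

theorem taylorD_apply_insert_eq_zero {σ τ : Finset (Finset V)} (hGτ : G ∉ τ)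
    (h : ¬ τ.sup id ⊆ (σ.erase G).sup id) : taylorD k σ (insert G τ) = 0 := by
  refine taylorD_apply_eq_zero fun F _ hFeq => h (Finset.sup_mono fun T hT => ?_)
  have hT' : T ∈ σ.erase F := hFeq ▸ Finset.mem_insert_of_mem hT
  exact Finset.mem_erase.2 ⟨ne_of_mem_of_not_mem hT hGτ, Finset.mem_of_mem_erase hT'⟩

theorem taylorSign_mul_taylorD_erase_apply {σ τ : Finset (Finset V)} (hGσ : G ∈ σ) (hGτ : G ∉ τ)
    (hsup : (σ.erase G).sup id = τ.sup id) :
    taylorSign k σ G * taylorD k (σ.erase G) τ =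
      -(taylorSign k (insert G τ) G * taylorD k σ (insert G τ)) := by
  by_cases hex : ∃ F ∈ σ.erase G, (σ.erase G).erase F = τ
  · obtain ⟨F, hF, rfl⟩ := hex
    obtain ⟨hFG, hFσ⟩ := Finset.mem_erase.1 hF
    have hins : insert G ((σ.erase G).erase F) = σ.erase F := by
      rw [Finset.erase_right_comm, Finset.insert_erase (Finset.mem_erase.2 ⟨hFG.symm, hGσ⟩)]
    have hsupF : (σ.erase F).sup id = σ.sup id := by
      rw [← hins, ← Finset.insert_erase hGσ, Finset.sup_insert, Finset.sup_insert,
        Finset.erase_insert (Finset.notMem_erase G σ), hsup]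
    rw [hins, taylorD_apply_erase hF, taylorD_apply_erase hFσ, taylorCoeff, taylorCoeff,
      if_pos hsup.symm, if_pos hsupF, taylorSign_mul_taylorSign_erase hGσ hFσ hFG.symm]
    ring
  · have hD : taylorD k σ (insert G τ) = 0 := by
      refine taylorD_apply_eq_zero fun F hF hFeq => hex ⟨F, ?_, ?_⟩
      · refine Finset.mem_erase.2 ⟨fun hFG => ?_, hF⟩
        subst hFG
        exact Finset.notMem_erase F σ (hFeq ▸ Finset.mem_insert_self F τ)
      · rw [Finset.erase_right_comm, hFeq, Finset.erase_insert hGτ]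
    rw [taylorD_apply_eq_zero fun F hF hFeq => hex ⟨F, hF, hFeq⟩, hD, mul_zero, mul_zero, neg_zero]

theorem taylorDiff_eraseFacet (z : 𝒞) :
    taylorDiff k (eraseFacet k G z) =
      ∑ σ ∈ z.support, (z σ * taylorSign k σ G) • taylorD k (σ.erase G) := by
  rw [eraseFacet, linearCombination_apply, Finsupp.sum, map_sum]
  exact Finset.sum_congr rfl fun σ _ => by
    rw [map_smul, map_smul, taylorDiff_single, one_smul, smul_smul]

/-- The coefficient of `τ` in `∂ (eraseFacet G z)` is, up to sign, that of `insert G τ` in `∂z`;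
by maximality of `u.card`, no other term of `x` contributes to the latter in `∂x`. -/
theorem taylorDiff_eraseFacet_filter_eq_zero {x : 𝒞} {u : Finset V}
    (hx : x ∈ supported k k {σ | G ∈ σ}) (hcyc : taylorDiff k x = 0)
    (hmax : ∀ σ ∈ x.support, ((σ.erase G).sup id).card ≤ u.card) :
    taylorDiff k (eraseFacet k G (x.filter fun σ => (σ.erase G).sup id = u)) = 0 := by
  set z := x.filter fun σ => (σ.erase G).sup id = u
  set w := x.filter fun σ => ¬ (σ.erase G).sup id = u
  have hz : z ∈ supported k k ({σ | G ∈ σ} ∩ {σ | (σ.erase G).sup id = u}) :=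
    filter_mem_supported hx
  have hKz : eraseFacet k G z ∈ supported k k {τ | G ∉ τ ∧ τ.sup id = u} :=
    eraseFacet_mem_supported hz fun σ hσ => ⟨Finset.notMem_erase G σ, hσ.2⟩
  have hDKz : taylorDiff k (eraseFacet k G z) ∈ supported k k {τ | G ∉ τ ∧ τ.sup id = u} :=
    taylorDiff_mem_supported hKz fun τ hτ F _ hsup =>
      ⟨fun h => hτ.1 (Finset.mem_of_mem_erase h), hsup.trans hτ.2⟩
  ext τ
  by_cases hτ : G ∉ τ ∧ τ.sup id = u
  swap
  · exact (mem_supported' _ _).1 hDKz τ hτ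
  obtain ⟨hGτ, hτu⟩ := hτ
  have hw : taylorDiff k w (insert G τ) = 0 := by
    rw [taylorDiff_apply]
    refine Finset.sum_eq_zero fun σ hσ => ?_
    rw [support_filter, Finset.mem_filter] at hσ
    have hσu : ¬ u ⊆ (σ.erase G).sup id := fun hsub =>
      hσ.2 (Finset.eq_of_subset_of_card_le hsub (hmax σ hσ.1)).symm
    rw [taylorD_apply_insert_eq_zero hGτ (hτu ▸ hσu), mul_zero]
  have hzc : taylorDiff k z (insert G τ) = 0 := by
    have h := DFunLike.congr_fun hcyc (insert G τ)
    rwa [← filter_add_filter_not x (fun σ => (σ.erase G).sup id = u), map_add,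
      Finsupp.add_apply, hw, add_zero] at h
  rw [taylorDiff_eraseFacet, Finset.sum_apply', coe_zero, Pi.zero_apply]
  calc ∑ σ ∈ z.support, ((z σ * taylorSign k σ G) • taylorD k (σ.erase G)) τ
      = ∑ σ ∈ z.support, -taylorSign k (insert G τ) G * (z σ * taylorD k σ (insert G τ)) := by
        refine Finset.sum_congr rfl fun σ hσ => ?_
        rw [Finsupp.smul_apply, smul_eq_mul, mul_assoc, taylorSign_mul_taylorD_erase_apply
          (hz hσ).1 hGτ ((hz hσ).2.trans hτu.symm)]
        ring
    _ = 0 := by rw [← Finset.mul_sum, ← taylorDiff_apply, hzc, mul_zero]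

variable {Δ : Finset (Finset V)} {W u : Finset V} {i m : ℕ}

def residualBasis (Δ : Finset (Finset α)) (G : Finset α) (j : ℕ) (W : Finset α)
    (𝒰 : Set (Finset α)) : Set (Finset (Finset α)) :=
  {σ | σ ∈ strandBasis Δ j W ∧ G ∈ σ ∧ (σ.erase G).sup id ∈ 𝒰}

theorem residualBasis_empty (Δ : Finset (Finset α)) (G : Finset α) (j : ℕ) (W : Finset α) :
    residualBasis Δ G j W ∅ = ∅ :=
  Set.eq_empty_of_forall_notMem fun _ hσ => hσ.2.2

theorem isLowerSet_erase_of_forall_card_le {𝒰 : Finset (Finset α)} {u₀ : Finset α}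
    (h𝒰 : IsLowerSet (𝒰 : Set (Finset α))) (hmax : ∀ u ∈ 𝒰, u.card ≤ u₀.card) :
    IsLowerSet ((𝒰.erase u₀ : Finset (Finset α)) : Set (Finset α)) := by
  intro a b hba ha
  obtain ⟨hau₀, ha𝒰⟩ := Finset.mem_erase.1 ha
  refine Finset.mem_erase.2 ⟨?_, h𝒰 hba ha𝒰⟩
  rintro rfl
  exact hau₀ (Finset.eq_of_subset_of_card_le hba (hmax a ha𝒰)).symm

theorem residualBasis_mono {Δ : Finset (Finset α)} {G W : Finset α} {j : ℕ}
    {𝒰 𝒰' : Set (Finset α)} (h : 𝒰 ⊆ 𝒰') : residualBasis Δ G j W 𝒰 ⊆ residualBasis Δ G j W 𝒰' :=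
  fun _ hσ => ⟨hσ.1, hσ.2.1, h hσ.2.2⟩

theorem insert_erase_mem_residualBasis {Δ τ : Finset (Finset α)} {G F u W : Finset α} {j : ℕ}
    (hG : G ∈ Δ) (hGτ : G ∉ τ) (hτ : τ ∈ strandBasis Δ (j + 1) u) (hF : F ∈ τ)
    (hsup : (τ.erase F).sup id ≠ u) (hsupW : (insert G (τ.erase F)).sup id = W) :
    insert G (τ.erase F) ∈ residualBasis Δ G (j + 1) W {v | v ⊂ u} := by
  have hGτF : G ∉ τ.erase F := fun h => hGτ (Finset.mem_of_mem_erase h)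
  have hmem := insert_mem_strandBasis hG hGτF (erase_mem_strandBasis hτ hF)
  refine ⟨⟨hmem.1, hmem.2.1, hsupW⟩, Finset.mem_insert_self G _, ?_⟩
  rw [Finset.erase_insert hGτF, ← hτ.2.2]
  exact Finset.ssubset_iff_subset_ne.2
    ⟨Finset.sup_mono (Finset.erase_subset F τ), hτ.2.2 ▸ hsup⟩

theorem exists_add_taylorDiff_mem_residualBasis {u₀ : Finset V} {𝒰 : Set (Finset V)}
    (hG : G ∈ Δ) (hu₀W : G ∪ u₀ = W) (hu₀ : u₀ ≠ W) (hexact : multigradedBetti k Δ m u₀ = 0)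
    (hmax : ∀ u ∈ 𝒰, u.card ≤ u₀.card) {x : 𝒞}
    (hx : x ∈ supported k k (residualBasis Δ G (m + 1) W 𝒰)) (hcyc : taylorDiff k x = 0) :
    ∃ v ∈ strand k Δ (m + 2) W, x + taylorDiff k v ∈
      supported k k (residualBasis Δ G (m + 1) W (𝒰 \ {u₀} ∪ {u | u ⊂ u₀})) := by
  have hGu₀ : ¬ G ⊆ u₀ := fun h => hu₀ (by rw [← hu₀W, Finset.union_eq_right.2 h])
  set z := x.filter fun σ => (σ.erase G).sup id = u₀
  have hz : z ∈ supported k k (residualBasis Δ G (m + 1) W 𝒰 ∩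
      {σ | (σ.erase G).sup id = u₀}) := filter_mem_supported hx
  have hKz : eraseFacet k G z ∈ strand k Δ m u₀ := by
    rw [strand_eq_supported]
    refine eraseFacet_mem_supported hz fun σ ⟨⟨hσ, hGσ, _⟩, hσu₀⟩ => ?_
    exact hσu₀ ▸ erase_mem_strandBasis hσ hGσ
  have hKzcyc : taylorDiff k (eraseFacet k G z) = 0 :=
    taylorDiff_eraseFacet_filter_eq_zero (supported_mono (fun σ hσ => hσ.2.1) hx) hcyc
      fun σ hσ => hmax _ (hx hσ).2.2
  obtain ⟨y, hy, hyz⟩ := (multigradedBetti_eq_zero_iff Δ m u₀).1 hexact _ hKz hKzcyc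
  rw [strand_eq_supported] at hy
  have hGy : ∀ τ ∈ strandBasis Δ (m + 1) u₀, G ∉ τ ∧ τ.sup id = u₀ := fun τ hτ =>
    ⟨fun hGτ => hGu₀ (hτ.2.2 ▸ Finset.le_sup (f := id) hGτ), hτ.2.2⟩
  refine ⟨insertFacet k G y, ?_, ?_⟩
  · rw [strand_eq_supported, ← hu₀W]
    exact insertFacet_mem_supported hy fun τ hτ => insert_mem_strandBasis hG (hGy τ hτ).1 hτ
  have hE := insertFacet_homotopy (t := residualBasis Δ G (m + 1) W {u | u ⊂ u₀}) hy hGy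
    fun τ hτ F hF hsup hsup' =>
      insert_erase_mem_residualBasis hG (hGy τ hτ).1 hτ hF hsup (hsup'.trans hu₀W)
  rw [if_neg hGu₀, sub_zero, hyz,
    insertFacet_eraseFacet (supported_mono (fun σ hσ => hσ.1.2.1) hz)] at hE
  have hrest : x - z ∈ supported k k (residualBasis Δ G (m + 1) W (𝒰 \ {u₀})) := by
    rw [sub_eq_iff_eq_add'.2 (filter_add_filter_not x _).symm]
    refine supported_mono ?_ (filter_mem_supported hx)
    rintro σ ⟨⟨hσ, hGσ, hσ𝒰⟩, hσu₀⟩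
    exact ⟨hσ, hGσ, hσ𝒰, hσu₀⟩
  rw [show x + taylorDiff k (insertFacet k G y) =
    (x - z) + (taylorDiff k (insertFacet k G y) + z) by abel]
  exact Submodule.add_mem _
    (supported_mono (residualBasis_mono Set.subset_union_left) hrest)
    (supported_mono (residualBasis_mono Set.subset_union_right) hE)

theorem exists_taylorDiff_eq_of_mem_residualBasis (hG : G ∈ Δ)
    (hA : ∀ u ⊂ W, G ∪ u = W → multigradedBetti k Δ m u = 0) (𝒰 : Finset (Finset V))
    (h𝒰 : IsLowerSet (𝒰 : Set (Finset V))) (hW : W ∉ 𝒰) {x : 𝒞}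
    (hx : x ∈ supported k k (residualBasis Δ G (m + 1) W 𝒰)) (hcyc : taylorDiff k x = 0) :
    ∃ w ∈ strand k Δ (m + 2) W, taylorDiff k w = x := by
  induction 𝒰 using Finset.strongInduction generalizing x with
  | H 𝒰 ih =>
  rcases 𝒰.eq_empty_or_nonempty with rfl | hne
  · rw [Finset.coe_empty, residualBasis_empty, supported_empty, Submodule.mem_bot] at hx
    exact ⟨0, Submodule.zero_mem _, by rw [map_zero, hx]⟩
  obtain ⟨u₀, hu₀, hmax⟩ := 𝒰.exists_max_image Finset.card hne
  have hlower := isLowerSet_erase_of_forall_card_le h𝒰 hmax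
  have ih' : ∀ {x : 𝒞}, x ∈ supported k k (residualBasis Δ G (m + 1) W (𝒰.erase u₀)) →
      taylorDiff k x = 0 → ∃ w ∈ strand k Δ (m + 2) W, taylorDiff k w = x :=
    ih _ (Finset.erase_ssubset hu₀) hlower fun h => hW (Finset.mem_of_mem_erase h)
  by_cases hattained : ∃ σ ∈ x.support, (σ.erase G).sup id = u₀
  · obtain ⟨σ, hσ, hσu₀⟩ := hattained
    obtain ⟨⟨-, -, hσW⟩, hGσ, -⟩ := hx hσ
    have hu₀W : G ∪ u₀ = W := by rw [← hσW, sup_eq_union_sup_erase hGσ, hσu₀]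
    have hu₀ne : u₀ ≠ W := fun h => hW (h ▸ hu₀)
    have hu₀lt : u₀ ⊂ W :=
      Finset.ssubset_iff_subset_ne.2 ⟨hu₀W ▸ Finset.subset_union_right, hu₀ne⟩
    obtain ⟨v, hv, hxv⟩ := exists_add_taylorDiff_mem_residualBasis hG hu₀W hu₀ne
      (hA u₀ hu₀lt hu₀W) hmax hx hcyc
    have hsub : (𝒰 : Set (Finset V)) \ {u₀} ∪ {u | u ⊂ u₀} ⊆ (𝒰.erase u₀ : Finset (Finset V)) := by
      rintro u (⟨hu, hne⟩ | hu)
      · exact Finset.mem_erase.2 ⟨hne, hu⟩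
      · exact Finset.mem_erase.2 ⟨hu.ne, h𝒰 hu.le hu₀⟩
    obtain ⟨w, hw, hwx⟩ := ih' (supported_mono (residualBasis_mono hsub) hxv)
      (by rw [map_add, hcyc, taylorDiff_taylorDiff, add_zero])
    exact ⟨w - v, Submodule.sub_mem _ hw hv, by rw [map_sub, hwx, add_sub_cancel_right]⟩
  · refine ih' (fun σ hσ => ?_) hcyc
    obtain ⟨hσ', hGσ, hσ𝒰⟩ := hx hσ
    exact ⟨hσ', hGσ, Finset.mem_erase.2 ⟨fun h => hattained ⟨σ, hσ, h⟩, hσ𝒰⟩⟩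

theorem sub_taylorDiff_insertFacet_mem (hG : G ∈ Δ) (hGW : G ⊆ W) {j : ℕ} {x : 𝒞}
    (hx : x ∈ supported k k (strandBasis Δ (j + 1) W)) :
    x - taylorDiff k (insertFacet k G (x.filter fun σ => G ∉ σ)) ∈
      supported k k (strandBasis Δ (j + 1) W ∩ {σ | G ∈ σ}) := by
  set b := x.filter fun σ => G ∉ σ
  have hb : b ∈ supported k k (strandBasis Δ (j + 1) W ∩ {σ | G ∉ σ}) := filter_mem_supported hx
  have hGW' : G ∪ W = W := Finset.union_eq_right.2 hGW
  have hE := insertFacet_homotopy (t := strandBasis Δ (j + 1) W ∩ {σ | G ∈ σ}) hb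
    (fun τ hτ => ⟨hτ.2, hτ.1.2.2⟩) fun τ hτ F hF _ hsup' => by
      have hmem := insert_mem_strandBasis hG (fun h => hτ.2 (Finset.mem_of_mem_erase h))
        (erase_mem_strandBasis hτ.1 hF)
      exact ⟨⟨hmem.1, hmem.2.1, hsup'.trans hGW'⟩, Finset.mem_insert_self G _⟩
  rw [if_pos hGW] at hE
  have hDb : taylorDiff k b ∈ supported k k (strandBasis Δ j W ∩ {σ | G ∉ σ}) :=
    taylorDiff_mem_supported hb fun σ hσ F hF hsup =>
      ⟨hsup.trans hσ.1.2.2 ▸ erase_mem_strandBasis hσ.1 hF,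
        fun h => hσ.2 (Finset.mem_of_mem_erase h)⟩
  have hJDb : insertFacet k G (taylorDiff k b) ∈
      supported k k (strandBasis Δ (j + 1) W ∩ {σ | G ∈ σ}) :=
    insertFacet_mem_supported hDb fun τ hτ =>
      ⟨hGW' ▸ insert_mem_strandBasis hG hτ.2 hτ.1, Finset.mem_insert_self G τ⟩
  have ha : x.filter (fun σ => G ∈ σ) ∈ supported k k (strandBasis Δ (j + 1) W ∩ {σ | G ∈ σ}) :=
    filter_mem_supported hx
  rw [show x - taylorDiff k (insertFacet k G b) = (x - b) + insertFacet k G (taylorDiff k b) -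
      (taylorDiff k (insertFacet k G b) + insertFacet k G (taylorDiff k b) - b) by abel,
    sub_eq_of_eq_add (filter_add_filter_not x fun σ => G ∈ σ).symm]
  exact Submodule.sub_mem _ (Submodule.add_mem _ ha hJDb) hE

theorem multigradedBetti_succ_eq_zero (hG : G ∈ Δ) (hGW : G ⊆ W)
    (hA : ∀ u ⊂ W, G ∪ u = W → multigradedBetti k Δ m u = 0) :
    multigradedBetti k Δ (m + 1) W = 0 := by
  refine (multigradedBetti_eq_zero_iff Δ (m + 1) W).2 fun x hx hcyc => ?_
  rw [strand_eq_supported] at hx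
  set v := insertFacet k G (x.filter fun σ => G ∉ σ)
  have hv : v ∈ strand k Δ (m + 2) W := by
    rw [strand_eq_supported, ← Finset.union_eq_right.2 hGW]
    exact insertFacet_mem_supported (filter_mem_supported hx) fun τ hτ =>
      insert_mem_strandBasis hG hτ.2 hτ.1
  have hx₁ := sub_taylorDiff_insertFacet_mem hG hGW hx
  have hcyc₁ : taylorDiff k (x - taylorDiff k v) = 0 := by
    rw [map_sub, hcyc, taylorDiff_taylorDiff, sub_zero]
  have hres : x - taylorDiff k v ∈ supported k k (residualBasis Δ G (m + 1) W W.ssubsets) :=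
    fun σ hσ => ⟨(hx₁ hσ).1, (hx₁ hσ).2, Finset.mem_ssubsets.2 <| Finset.ssubset_iff_subset_ne.2
      ⟨(hx₁ hσ).1.2.2 ▸ Finset.sup_mono (Finset.erase_subset G σ),
        sup_erase_ne_of_taylorDiff_eq_zero (fun τ hτ => ⟨(hx₁ hτ).2, (hx₁ hτ).1.2.2⟩) hcyc₁ hσ⟩⟩
  have hlower : IsLowerSet (W.ssubsets : Set (Finset V)) := fun a b hba ha =>
    Finset.mem_ssubsets.2 (lt_of_le_of_lt hba (Finset.mem_ssubsets.1 ha))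
  obtain ⟨w, hw, hwx⟩ := exists_taylorDiff_eq_of_mem_residualBasis hG hA W.ssubsets hlower
    (fun h => (Finset.mem_ssubsets.1 h).ne rfl) hres hcyc₁
  exact ⟨v + w, Submodule.add_mem _ hv hw, by rw [map_add, hwx, add_sub_cancel]⟩

theorem strand_induced_self (Δ : Finset (Finset α)) (j : ℕ) (u : Finset α) :
    strand k (induced Δ u) j u = strand k Δ j u := by
  rw [strand_eq_supported, strand_eq_supported]
  congr 1
  ext σ
  refine ⟨fun ⟨hσ, hcard, hsup⟩ => ⟨hσ.trans (Finset.filter_subset _ _), hcard, hsup⟩,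
    fun ⟨hσ, hcard, hsup⟩ => ⟨fun F hF => ?_, hcard, hsup⟩⟩
  exact Finset.mem_filter.2 ⟨hσ hF, hsup ▸ Finset.le_sup (f := id) hF⟩

theorem multigradedBetti_induced_self :
    multigradedBetti k (induced Δ u) i u = multigradedBetti k Δ i u := by
  unfold multigradedBetti taylorCycles taylorBoundaries
  rw [strand_induced_self, strand_induced_self]

theorem multigradedBetti_zero_eq_zero (hu : u.Nonempty) : multigradedBetti k Δ 0 u = 0 :=
  multigradedBetti_eq_zero_of_strandBasis_eq_empty <| Set.eq_empty_of_forall_notMem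
    fun σ ⟨_, hcard, hsup⟩ => hu.ne_empty (by rw [← hsup, Finset.card_eq_zero.1 hcard]; rfl)

theorem exists_sup_eq_of_multigradedBetti_ne_zero (h : multigradedBetti k Δ i u ≠ 0) :
    ∃ σ ⊆ Δ, σ.sup id = u := by
  by_contra hσ
  exact h (multigradedBetti_eq_zero_of_strandBasis_eq_empty <| Set.eq_empty_of_forall_notMem
    fun σ ⟨hσΔ, _, hsup⟩ => hσ ⟨σ, hσΔ, hsup⟩)

theorem gradedBetti_card_vertexSet (Δ : Finset (Finset V)) (i : ℕ) :
    gradedBetti k Δ i (vertexSet Δ).card = multigradedBetti k Δ i (vertexSet Δ) := by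
  rw [gradedBetti, Finset.powersetCard_self, Finset.sum_singleton]

theorem vertexSet_induced {Δ : Finset (Finset α)} {u : Finset α} (h : ∃ σ ⊆ Δ, σ.sup id = u) :
    vertexSet (induced Δ u) = u := by
  obtain ⟨σ, hσ, rfl⟩ := h
  refine le_antisymm (Finset.sup_le fun F hF => (Finset.mem_filter.1 hF).2) ?_
  exact Finset.sup_mono fun F hF => Finset.mem_filter.2 ⟨hσ hF, Finset.le_sup (f := id) hF⟩

theorem gradedBetti_induced_card_ne_zero (h : multigradedBetti k Δ i u ≠ 0) :
    gradedBetti k (induced Δ u) i u.card ≠ 0 := by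
  have hu := vertexSet_induced (exists_sup_eq_of_multigradedBetti_ne_zero h)
  have hβ := gradedBetti_card_vertexSet (k := k) (induced Δ u) i
  rw [hu, multigradedBetti_induced_self] at hβ
  rwa [hβ]

theorem ssubset_vertexSet_of_one_lt_card {Δ : Finset (Finset α)} {G : Finset α}
    (hfacet : IsAntichain (· ⊆ ·) (Δ : Set (Finset α))) (hcard : 1 < Δ.card) (hG : G ∈ Δ) :
    G ⊂ vertexSet Δ := by
  obtain ⟨F, hF, hFG⟩ := Finset.exists_mem_ne hcard G
  obtain ⟨v, hvF, hvG⟩ := Finset.not_subset.1 fun h => hFG (hfacet.eq hF hG h)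
  exact (Finset.ssubset_iff_of_subset (Finset.le_sup (f := id) hG)).2
    ⟨v, Finset.le_sup (f := id) hF hvF, hvG⟩

theorem complements_of_union_eq {Δ : Finset (Finset α)} {G u : Finset α}
    (hfacet : IsAntichain (· ⊆ ·) (Δ : Set (Finset α))) (hG : G ∈ Δ) (hGV : G ⊂ vertexSet Δ)
    (hu : u ⊂ vertexSet Δ) (hGu : G ∪ u = vertexSet Δ) : Complements Δ G u := by
  refine ⟨hGV, hu, hGu, fun F hF ⟨hFG, hFu⟩ => hu.ne ?_⟩
  have hFG' : F = G := hfacet.eq hF hG (Finset.mem_filter.1 hFG).2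
  rw [← hGu, Finset.union_eq_right.2 (hFG' ▸ (Finset.mem_filter.1 hFu).2)]

end

theorem exists_complement_of_facet
    (Δ : Finset (Finset V)) (hfacet : IsAntichain (· ⊆ ·) (Δ : Set (Finset V)))
    (hfacets : 1 < Δ.card)
    (n : ℕ) (hn : (vertexSet Δ).card = n)
    (i : ℕ) (hβ : gradedBetti k Δ i n ≠ 0)
    (G : Finset V) (hG : G ∈ Δ) :
    ∃ u : Finset V, Complements Δ G u ∧
      gradedBetti k (induced Δ u) (i - 1) u.card ≠ 0 := by
  have hGV := ssubset_vertexSet_of_one_lt_card hfacet hfacets hG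
  rw [← hn, gradedBetti_card_vertexSet] at hβ
  obtain ⟨v, hv, -⟩ := Finset.exists_of_ssubset hGV
  obtain ⟨m, rfl⟩ : ∃ m, i = m + 1 := Nat.exists_eq_succ_of_ne_zero fun h => by
    subst h
    exact hβ (multigradedBetti_zero_eq_zero ⟨v, hv⟩)
  by_contra hcon
  refine hβ (multigradedBetti_succ_eq_zero hG hGV.subset fun u hu hGu => ?_)
  by_contra hβu
  exact hcon ⟨u, complements_of_union_eq hfacet hG hGV hu hGu,
    gradedBetti_induced_card_ne_zero hβu⟩

end FacetPaper
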